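/- arXiv:2207.07063 — 3 statements merged into one kernel-verified Lean document; each statement's English description precedes it below -/
import Mathlib

section
/- Every element of a coassociative counital coalgebra C over a field k is contained in a finite-dimensional subcoalgebra of C. Consequently, C is the directed union of its finite-dimensional subcoalgebras. -/
/-!
The dual algebra `C* = C →ₗ[k] k` acts on `C` from both sides, by `f ⇀ c = ∑ c₁ f(c₂)` and
`c ↼ f = ∑ f(c₁) c₂`; coassociativity says exactly that these are commuting module structures.
Every `x` lies in the sub-bimodule `C* ⇀ x ↼ C*` (take `f = ε`), which is finite-dimensional:
for `c` in a finite-dimensional subspace `W`, all `f ⇀ c` and `c ↼ f` lie in the span of the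
tensor factors of `Δ(W)`. A subspace `D` stable under both actions is a subcoalgebra, because the
contractions of `Δ y` with functionals are `f ⇀ y` and `y ↼ f`, and over a field a tensor all of
whose left and right contractions lie in `D` lies in `D ⊗ D` (split off a complement of `D`).
-/

open scoped TensorProduct
open TensorProduct (lid rid assoc map)
open LinearMap

namespace TensorProduct

section CommSemiring

variable {R M N : Type*} [CommSemiring R] [AddCommMonoid M] [Module R M] [AddCommMonoid N]
  [Module R N]

lemma eq_zero_of_forall_lid_rTensor_eq_zero [Module.Free R M] {w : M ⊗[R] N}
    (h : ∀ f : M →ₗ[R] R, lid R N (f.rTensor N w) = 0) : w = 0 := by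
  classical
  apply (equivFinsuppOfBasisLeft (Module.Free.chooseBasis R M)).injective
  ext i
  simp [equivFinsuppOfBasisLeft_apply, h]

lemma eq_zero_of_forall_rid_lTensor_eq_zero [Module.Free R N] {w : M ⊗[R] N}
    (h : ∀ g : N →ₗ[R] R, rid R M (g.lTensor M w) = 0) : w = 0 := by
  classical
  apply (equivFinsuppOfBasisRight (Module.Free.chooseBasis R N)).injective
  ext i
  simp [equivFinsuppOfBasisRight_apply, h]

lemma rid_lTensor_mem_of_mem_range_map {P : Submodule R M} {Q : Submodule R N} {u : M ⊗[R] N}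
    (hu : u ∈ range (map P.subtype Q.subtype)) (g : N →ₗ[R] R) :
    rid R M (g.lTensor M u) ∈ P := by
  obtain ⟨w, rfl⟩ := hu
  induction w with
  | zero => simp
  | tmul p q => simpa using P.smul_mem (g q) p.2
  | add v w hv hw => simpa only [map_add] using P.add_mem hv hw

lemma lid_rTensor_mem_of_mem_range_map {P : Submodule R M} {Q : Submodule R N} {u : M ⊗[R] N}
    (hu : u ∈ range (map P.subtype Q.subtype)) (f : M →ₗ[R] R) :
    lid R N (f.rTensor N u) ∈ Q := by
  obtain ⟨w, rfl⟩ := hu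
  induction w with
  | zero => simp
  | tmul p q => simpa using Q.smul_mem (f p) q.2
  | add v w hv hw => simpa only [map_add] using Q.add_mem hv hw

end CommSemiring

section Field

variable {K M N : Type*} [Field K] [AddCommGroup M] [Module K M] [AddCommGroup N] [Module K N]

lemma rTensor_apply_eq_self_of_forall_rid_lTensor_mem {P : Submodule K M} {e : M →ₗ[K] M}
    (he : ∀ p ∈ P, e p = p) {u : M ⊗[K] N}
    (hu : ∀ g : N →ₗ[K] K, rid K M (g.lTensor M u) ∈ P) :
    e.rTensor N u = u := by
  rw [← sub_eq_zero]
  refine eq_zero_of_forall_rid_lTensor_eq_zero fun g => ?_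
  have rid_lTensor_rTensor (v : M ⊗[K] N) :
      rid K M (g.lTensor M (e.rTensor N v)) = e (rid K M (g.lTensor M v)) := by
    induction v with
    | zero => simp
    | tmul m n => simp
    | add v w hv hw => simp only [map_add, hv, hw]
  rw [map_sub, map_sub, rid_lTensor_rTensor, he _ (hu g), sub_self]

lemma lTensor_apply_eq_self_of_forall_lid_rTensor_mem {Q : Submodule K N} {e : N →ₗ[K] N}
    (he : ∀ q ∈ Q, e q = q) {u : M ⊗[K] N}
    (hu : ∀ f : M →ₗ[K] K, lid K N (f.rTensor N u) ∈ Q) :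
    e.lTensor M u = u := by
  rw [← sub_eq_zero]
  refine eq_zero_of_forall_lid_rTensor_eq_zero fun f => ?_
  have lid_rTensor_lTensor (v : M ⊗[K] N) :
      lid K N (f.rTensor N (e.lTensor M v)) = e (lid K N (f.rTensor N v)) := by
    induction v with
    | zero => simp
    | tmul m n => simp
    | add v w hv hw => simp only [map_add, hv, hw]
  rw [map_sub, map_sub, lid_rTensor_lTensor, he _ (hu f), sub_self]

lemma mem_range_map_subtype_iff {P : Submodule K M} {Q : Submodule K N} {u : M ⊗[K] N} :
    u ∈ range (map P.subtype Q.subtype) ↔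
      (∀ g : N →ₗ[K] K, rid K M (g.lTensor M u) ∈ P) ∧
        ∀ f : M →ₗ[K] K, lid K N (f.rTensor N u) ∈ Q := by
  refine ⟨fun hu => ⟨rid_lTensor_mem_of_mem_range_map hu, lid_rTensor_mem_of_mem_range_map hu⟩,
    fun ⟨hP, hQ⟩ => ?_⟩
  obtain ⟨π, hπ⟩ := P.subtype.exists_leftInverse_of_injective P.ker_subtype
  obtain ⟨π', hπ'⟩ := Q.subtype.exists_leftInverse_of_injective Q.ker_subtype
  refine ⟨map π π' u, ?_⟩
  rw [← comp_apply, ← map_comp, ← rTensor_comp_lTensor, comp_apply,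
    lTensor_apply_eq_self_of_forall_lid_rTensor_mem _ hQ,
    rTensor_apply_eq_self_of_forall_rid_lTensor_mem _ hP]
  · exact fun p hp => congr_arg Subtype.val (LinearMap.congr_fun hπ ⟨p, hp⟩)
  · exact fun q hq => congr_arg Subtype.val (LinearMap.congr_fun hπ' ⟨q, hq⟩)

end Field

end TensorProduct

namespace Coalgebra

section CommSemiring

variable {R C : Type*} [CommSemiring R] [AddCommMonoid C] [Module R C] [Coalgebra R C]

/-- `lhit f c = f ⇀ c = ∑ c₁ f(c₂)`. -/
noncomputable def lhit (f : C →ₗ[R] R) : C →ₗ[R] C := rid R C ∘ₗ f.lTensor C ∘ₗ comul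

/-- `rhit f c = c ↼ f = ∑ f(c₁) c₂`. -/
noncomputable def rhit (f : C →ₗ[R] R) : C →ₗ[R] C := lid R C ∘ₗ f.rTensor C ∘ₗ comul

@[simp] lemma lhit_counit_apply (c : C) : lhit (counit (R := R)) c = c := by
  simp [lhit, lTensor_counit_comul]

@[simp] lemma rhit_counit_apply (c : C) : rhit (counit (R := R)) c = c := by
  simp [rhit, rTensor_counit_comul]

lemma comul_comp_rhit (f : C →ₗ[R] R) :
    comul ∘ₗ rhit f = (rhit f).rTensor C ∘ₗ comul := by
  have lid_comp : (comul : C →ₗ[R] C ⊗[R] C) ∘ₗ (lid R C).toLinearMap ∘ₗ f.rTensor C =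
      (lid R (C ⊗[R] C)).toLinearMap ∘ₗ f.rTensor _ ∘ₗ comul.lTensor C := by
    ext; simp
  have lid_assoc : (lid R (C ⊗[R] C)).toLinearMap ∘ₗ f.rTensor _ ∘ₗ (assoc R C C C).toLinearMap =
      ((lid R C).toLinearMap ∘ₗ f.rTensor C).rTensor C := by
    ext; simp [TensorProduct.smul_tmul']
  calc comul ∘ₗ rhit f
      = (lid R (C ⊗[R] C)).toLinearMap ∘ₗ f.rTensor _ ∘ₗ comul.lTensor C ∘ₗ comul := by
        simp only [rhit, ← comp_assoc, lid_comp]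
    _ = ((lid R C).toLinearMap ∘ₗ f.rTensor C).rTensor C ∘ₗ comul.rTensor C ∘ₗ comul := by
        rw [← coassoc]; simp only [← comp_assoc, lid_assoc]
    _ = (rhit f).rTensor C ∘ₗ comul := by simp only [rhit, rTensor_comp, comp_assoc]

lemma comul_comp_lhit (f : C →ₗ[R] R) :
    comul ∘ₗ lhit f = (lhit f).lTensor C ∘ₗ comul := by
  have rid_comp : (comul : C →ₗ[R] C ⊗[R] C) ∘ₗ (rid R C).toLinearMap ∘ₗ f.lTensor C =
      (rid R (C ⊗[R] C)).toLinearMap ∘ₗ f.lTensor _ ∘ₗ comul.rTensor C := by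
    ext; simp
  have rid_assoc : (rid R (C ⊗[R] C)).toLinearMap ∘ₗ f.lTensor _ ∘ₗ
      (assoc R C C C).symm.toLinearMap = ((rid R C).toLinearMap ∘ₗ f.lTensor C).lTensor C := by
    ext; simp [TensorProduct.tmul_smul]
  calc comul ∘ₗ lhit f
      = (rid R (C ⊗[R] C)).toLinearMap ∘ₗ f.lTensor _ ∘ₗ comul.rTensor C ∘ₗ comul := by
        simp only [lhit, ← comp_assoc, rid_comp]
    _ = ((rid R C).toLinearMap ∘ₗ f.lTensor C).lTensor C ∘ₗ comul.lTensor C ∘ₗ comul := by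
        rw [← coassoc_symm]; simp only [← comp_assoc, rid_assoc]
    _ = (lhit f).lTensor C ∘ₗ comul := by simp only [lhit, lTensor_comp, comp_assoc]

lemma lhit_comp_lhit (f g : C →ₗ[R] R) : lhit f ∘ₗ lhit g = lhit (f ∘ₗ lhit g) :=
  calc lhit f ∘ₗ lhit g = rid R C ∘ₗ f.lTensor C ∘ₗ (comul ∘ₗ lhit g) := rfl
    _ = rid R C ∘ₗ (f ∘ₗ lhit g).lTensor C ∘ₗ comul := by rw [comul_comp_lhit, lTensor_comp]; rfl

lemma rhit_comp_rhit (f g : C →ₗ[R] R) : rhit f ∘ₗ rhit g = rhit (f ∘ₗ rhit g) :=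
  calc rhit f ∘ₗ rhit g = lid R C ∘ₗ f.rTensor C ∘ₗ (comul ∘ₗ rhit g) := rfl
    _ = lid R C ∘ₗ (f ∘ₗ rhit g).rTensor C ∘ₗ comul := by rw [comul_comp_rhit, rTensor_comp]; rfl

lemma lhit_comp_rhit (f g : C →ₗ[R] R) : lhit f ∘ₗ rhit g = rhit g ∘ₗ lhit f :=
  calc lhit f ∘ₗ rhit g = rid R C ∘ₗ f.lTensor C ∘ₗ (comul ∘ₗ rhit g) := rfl
    _ = (rid R C ∘ₗ f.lTensor C ∘ₗ (rhit g).rTensor C) ∘ₗ comul := by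
        rw [comul_comp_rhit]; rfl
    _ = (rhit g ∘ₗ rid R C ∘ₗ f.lTensor C) ∘ₗ comul := by
        congr 1; ext; simp
    _ = rhit g ∘ₗ lhit f := rfl

lemma exists_fg_forall_hit_mem {W : Submodule R C} (hW : W.FG) :
    ∃ V : Submodule R C, V.FG ∧ ∀ w ∈ W, ∀ f : C →ₗ[R] R, lhit f w ∈ V ∧ rhit f w ∈ V := by
  obtain ⟨s, rfl⟩ := hW
  obtain ⟨P, Q, hP, hQ, hs⟩ :=
    TensorProduct.exists_finite_submodule_of_setFinite _ (s.finite_toSet.image (comul (R := R)))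
  have hW : Submodule.span R s ≤ (range (map P.subtype Q.subtype)).comap comul :=
    Submodule.span_le.2 fun c hc => hs ⟨c, hc, rfl⟩
  refine ⟨P ⊔ Q, (Module.Finite.iff_fg.1 hP).sup (Module.Finite.iff_fg.1 hQ),
    fun w hw f => ⟨?_, ?_⟩⟩
  · exact Submodule.mem_sup_left (TensorProduct.rid_lTensor_mem_of_mem_range_map (hW hw) f)
  · exact Submodule.mem_sup_right (TensorProduct.lid_rTensor_mem_of_mem_range_map (hW hw) f)

variable (R) in
/-- The sub-bimodule `C* ⇀ x ↼ C*` of `C` generated by `x`. -/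
def hitSpan (x : C) : Submodule R C :=
  Submodule.span R (Set.range fun fg : (C →ₗ[R] R) × (C →ₗ[R] R) => lhit fg.1 (rhit fg.2 x))

lemma lhit_rhit_mem_hitSpan (f g : C →ₗ[R] R) (x : C) : lhit f (rhit g x) ∈ hitSpan R x :=
  Submodule.subset_span ⟨(f, g), rfl⟩

lemma self_mem_hitSpan (x : C) : x ∈ hitSpan R x := by
  simpa using lhit_rhit_mem_hitSpan (counit (R := R)) counit x

lemma lhit_mem_hitSpan {x y : C} (hy : y ∈ hitSpan R x) (f : C →ₗ[R] R) :
    lhit f y ∈ hitSpan R x := by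
  suffices hitSpan R x ≤ (hitSpan R x).comap (lhit f) from this hy
  refine Submodule.span_le.2 ?_
  rintro _ ⟨⟨g, h⟩, rfl⟩
  have := lhit_rhit_mem_hitSpan (f ∘ₗ lhit g) h x
  rwa [← lhit_comp_lhit] at this

lemma rhit_mem_hitSpan {x y : C} (hy : y ∈ hitSpan R x) (f : C →ₗ[R] R) :
    rhit f y ∈ hitSpan R x := by
  suffices hitSpan R x ≤ (hitSpan R x).comap (rhit f) from this hy
  refine Submodule.span_le.2 ?_
  rintro _ ⟨⟨g, h⟩, rfl⟩
  have := lhit_rhit_mem_hitSpan g (f ∘ₗ rhit h) x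
  rwa [← rhit_comp_rhit, comp_apply, ← comp_apply (lhit g), lhit_comp_rhit] at this

lemma exists_fg_hitSpan_le (x : C) : ∃ V : Submodule R C, V.FG ∧ hitSpan R x ≤ V := by
  obtain ⟨V₁, hV₁, h₁⟩ := exists_fg_forall_hit_mem (Submodule.fg_span_singleton (R := R) x)
  obtain ⟨V₂, hV₂, h₂⟩ := exists_fg_forall_hit_mem hV₁
  refine ⟨V₂, hV₂, Submodule.span_le.2 ?_⟩
  rintro _ ⟨⟨f, g⟩, rfl⟩
  exact (h₂ _ (h₁ x (Submodule.mem_span_singleton_self x) g).2 f).1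

def IsSubcoalgebra (D : Submodule R C) : Prop :=
  ∀ y ∈ D, comul y ∈ range (map D.subtype D.subtype)

lemma IsSubcoalgebra.sup {D₁ D₂ : Submodule R C} (h₁ : IsSubcoalgebra D₁)
    (h₂ : IsSubcoalgebra D₂) : IsSubcoalgebra (D₁ ⊔ D₂) := by
  intro y hy
  obtain ⟨y₁, hy₁, y₂, hy₂, rfl⟩ := Submodule.mem_sup.1 hy
  rw [map_add]
  exact add_mem (TensorProduct.range_mapIncl_mono le_sup_left le_sup_left (h₁ y₁ hy₁))
    (TensorProduct.range_mapIncl_mono le_sup_right le_sup_right (h₂ y₂ hy₂))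

end CommSemiring

section Field

variable {K C : Type*} [Field K] [AddCommGroup C] [Module K C] [Coalgebra K C]

lemma isSubcoalgebra_of_forall_hit_mem {D : Submodule K C}
    (hl : ∀ y ∈ D, ∀ f : C →ₗ[K] K, lhit f y ∈ D)
    (hr : ∀ y ∈ D, ∀ f : C →ₗ[K] K, rhit f y ∈ D) :
    IsSubcoalgebra D := fun y hy =>
  TensorProduct.mem_range_map_subtype_iff.2 ⟨hl y hy, hr y hy⟩

instance finiteDimensional_hitSpan (x : C) : FiniteDimensional K (hitSpan K x) := by
  obtain ⟨V, hV, hle⟩ := exists_fg_hitSpan_le (R := K) x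
  have : FiniteDimensional K V := Module.Finite.iff_fg.2 hV
  exact Submodule.finiteDimensional_of_le hle

lemma isSubcoalgebra_hitSpan (x : C) : IsSubcoalgebra (hitSpan K x) :=
  isSubcoalgebra_of_forall_hit_mem (fun _ hy => lhit_mem_hitSpan hy)
    (fun _ hy => rhit_mem_hitSpan hy)

end Field

end Coalgebra

/-- fundamental theorem of coalgebras: every element of a coassociative counital
coalgebra `C` over a field `k` lies in a finite-dimensional subcoalgebra `D ⊆ C`
(a subspace with `μ(D) ⊆ D ⊗ D`); moreover any two finite-dimensional subcoalgebras are
contained in a common finite-dimensional subcoalgebra, so `C` is the directed union of its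
finite-dimensional subcoalgebras. -/
theorem exists_finiteDimensional_subcoalgebra
    (k C : Type) [Field k] [AddCommGroup C] [Module k C] [Coalgebra k C] :
    (∀ x : C, ∃ D : Submodule k C, FiniteDimensional k D ∧ x ∈ D ∧
      ∀ y ∈ D, Coalgebra.comul (R := k) y ∈
        LinearMap.range (TensorProduct.map D.subtype D.subtype)) ∧
    (∀ D₁ D₂ : Submodule k C,
      FiniteDimensional k D₁ → FiniteDimensional k D₂ →
      (∀ y ∈ D₁, Coalgebra.comul (R := k) y ∈
        LinearMap.range (TensorProduct.map D₁.subtype D₁.subtype)) →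
      (∀ y ∈ D₂, Coalgebra.comul (R := k) y ∈
        LinearMap.range (TensorProduct.map D₂.subtype D₂.subtype)) →
      ∃ D : Submodule k C, FiniteDimensional k D ∧ D₁ ≤ D ∧ D₂ ≤ D ∧
        ∀ y ∈ D, Coalgebra.comul (R := k) y ∈
          LinearMap.range (TensorProduct.map D.subtype D.subtype)) :=
  ⟨fun x => ⟨Coalgebra.hitSpan k x, inferInstance, Coalgebra.self_mem_hitSpan x,
      Coalgebra.isSubcoalgebra_hitSpan x⟩,
    fun D₁ D₂ _ _ h₁ h₂ => ⟨D₁ ⊔ D₂, inferInstance, le_sup_left, le_sup_right,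
      Coalgebra.IsSubcoalgebra.sup h₁ h₂⟩⟩
end

section
/- Let M be a finite-dimensional left comodule over a coalgebra C over a field k. Then there exists a finite-dimensional subcoalgebra E ⊆ C such that the image of the coaction map ν: M → C⊗M is contained in E⊗M. -/
/-!
Write `ρ x = ∑ᵢ cᵢ(x) ⊗ bᵢ` in a basis `b` of `M`, so that the maps `cᵢ = (id ⊗ bᵢ*) ∘ ρ`
are the matrix coefficients of the comodule, and let `E` be the span of their images; it
is finite-dimensional because `M` is. Coassociativity says exactly that `Δ ∘ c = (id ⊗ c) ∘ ρ`
for every matrix coefficient `c`, and since `ρ` lands in `E ⊗ M` and `c` lands in `E`, this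
puts `Δ(E)` inside `E ⊗ E`.
-/

open TensorProduct

namespace TensorProduct

variable {R M X : Type*} [CommSemiring R] [AddCommMonoid M] [Module R M]
  [AddCommMonoid X] [Module R X]

theorem mem_range_rTensor_subtype_of_forall_coord_mem {ι : Type*} (b : Module.Basis ι R M)
    {E : Submodule R X} {z : X ⊗[R] M}
    (h : ∀ i, TensorProduct.rid R X ((b.coord i).lTensor X z) ∈ E) :
    z ∈ LinearMap.range (E.subtype.rTensor M) := by
  classical
  rw [← (equivFinsuppOfBasisRight b).symm_apply_apply z, equivFinsuppOfBasisRight_symm_apply]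
  refine Submodule.finsuppSum_mem _ _ _ _ fun i _ => ?_
  rw [equivFinsuppOfBasisRight_apply]
  exact ⟨⟨_, h i⟩ ⊗ₜ b i, rfl⟩

end TensorProduct

section MatrixCoeff

variable {R C M : Type*} [CommSemiring R] [AddCommMonoid C] [Module R C]
  [AddCommMonoid M] [Module R M]

noncomputable def matrixCoeff (ρ : M →ₗ[R] C ⊗[R] M) (f : Module.Dual R M) : M →ₗ[R] C :=
  (TensorProduct.rid R C).toLinearMap ∘ₗ f.lTensor C ∘ₗ ρ

variable [Coalgebra R C] {ρ : M →ₗ[R] C ⊗[R] M}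

theorem comul_comp_matrixCoeff
    (hcoassoc :
      (TensorProduct.assoc R C C M).toLinearMap ∘ₗ
          LinearMap.rTensor M (Coalgebra.comul (R := R)) ∘ₗ ρ =
        LinearMap.lTensor C ρ ∘ₗ ρ)
    (f : Module.Dual R M) :
    Coalgebra.comul ∘ₗ matrixCoeff ρ f = (matrixCoeff ρ f).lTensor C ∘ₗ ρ := by
  have comul_comp_rid :
      Coalgebra.comul ∘ₗ (TensorProduct.rid R C).toLinearMap ∘ₗ f.lTensor C =
        (TensorProduct.rid R (C ⊗[R] C)).toLinearMap ∘ₗ f.lTensor (C ⊗[R] C) ∘ₗ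
          (Coalgebra.comul (R := R)).rTensor M := by
    ext c m
    simp
  have rid_comp_assoc_symm :
      (TensorProduct.rid R (C ⊗[R] C)).toLinearMap ∘ₗ f.lTensor (C ⊗[R] C) ∘ₗ
          (TensorProduct.assoc R C C M).symm.toLinearMap =
        ((TensorProduct.rid R C).toLinearMap ∘ₗ f.lTensor C).lTensor C := by
    ext c c' m
    simp
  ext x
  have hx := LinearMap.congr_fun hcoassoc x
  simp only [LinearMap.comp_apply, LinearEquiv.coe_coe] at hx
  calc Coalgebra.comul (matrixCoeff ρ f x)
      = TensorProduct.rid R (C ⊗[R] C)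
          (f.lTensor (C ⊗[R] C) ((Coalgebra.comul (R := R)).rTensor M (ρ x))) :=
        LinearMap.congr_fun comul_comp_rid (ρ x)
    _ = TensorProduct.rid R (C ⊗[R] C)
          (f.lTensor (C ⊗[R] C) ((TensorProduct.assoc R C C M).symm (ρ.lTensor C (ρ x)))) := by
        rw [← hx, LinearEquiv.symm_apply_apply]
    _ = (matrixCoeff ρ f).lTensor C (ρ x) :=
        (LinearMap.congr_fun rid_comp_assoc_symm _).trans
          (LinearMap.lTensor_comp_apply _ _ _ _).symm

theorem comul_matrixCoeff_mem_range_map_subtype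
    (hcoassoc :
      (TensorProduct.assoc R C C M).toLinearMap ∘ₗ
          LinearMap.rTensor M (Coalgebra.comul (R := R)) ∘ₗ ρ =
        LinearMap.lTensor C ρ ∘ₗ ρ)
    {E : Submodule R C} (hρ : ∀ x, ρ x ∈ LinearMap.range (E.subtype.rTensor M))
    {f : Module.Dual R M} (hf : ∀ x, matrixCoeff ρ f x ∈ E) (x : M) :
    Coalgebra.comul (R := R) (matrixCoeff ρ f x) ∈
      LinearMap.range (TensorProduct.map E.subtype E.subtype) := by
  obtain ⟨w, hw⟩ := hρ x
  refine ⟨((matrixCoeff ρ f).codRestrict E hf).lTensor E w, ?_⟩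
  rw [LinearMap.map_lTensor, LinearMap.subtype_comp_codRestrict, ← LinearMap.lTensor_comp_rTensor,
    LinearMap.comp_apply, hw, ← LinearMap.comp_apply (LinearMap.lTensor C _) ρ,
    ← comul_comp_matrixCoeff hcoassoc f, LinearMap.comp_apply]

end MatrixCoeff

theorem exists_finiteDimensional_subcoalgebra_of_finite_comodule_general
    (k C M : Type) [Field k] [AddCommGroup C] [Module k C] [Coalgebra k C]
    [AddCommGroup M] [Module k M] [FiniteDimensional k M]
    (ρ : M →ₗ[k] C ⊗[k] M)
    (hcoassoc :
      (TensorProduct.assoc k C C M).toLinearMap ∘ₗ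
          LinearMap.rTensor M (Coalgebra.comul (R := k)) ∘ₗ ρ =
        LinearMap.lTensor C ρ ∘ₗ ρ) :
    ∃ E : Submodule k C, FiniteDimensional k E ∧
      (∀ y ∈ E, Coalgebra.comul (R := k) y ∈
        LinearMap.range (TensorProduct.map E.subtype E.subtype)) ∧
      ∀ x : M, ρ x ∈ LinearMap.range (LinearMap.rTensor M E.subtype) := by
  let b := Module.finBasis k M
  let E := ⨆ i, LinearMap.range (matrixCoeff ρ (b.coord i))
  have hcoeff : ∀ i x, matrixCoeff ρ (b.coord i) x ∈ E := fun i x =>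
    Submodule.mem_iSup_of_mem i (LinearMap.mem_range_self _ x)
  have hρ : ∀ x, ρ x ∈ LinearMap.range (E.subtype.rTensor M) := fun x =>
    mem_range_rTensor_subtype_of_forall_coord_mem b (fun i => hcoeff i x)
  have hcomul : E ≤ (LinearMap.range (TensorProduct.map E.subtype E.subtype)).comap
      Coalgebra.comul := by
    refine iSup_le fun i => ?_
    rintro _ ⟨x, rfl⟩
    exact comul_matrixCoeff_mem_range_map_subtype hcoassoc hρ (hcoeff i) x
  exact ⟨E, inferInstance, hcomul, hρ⟩

/-- if `M` is a finite-dimensional left comodule over a coalgebra `C` over a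
field `k`, then there is a finite-dimensional subcoalgebra `E ⊆ C` such that the image of the
coaction map `ρ : M → C ⊗ M` is contained in `E ⊗ M`. -/
theorem exists_finiteDimensional_subcoalgebra_of_finite_comodule
    (k C M : Type) [Field k] [AddCommGroup C] [Module k C] [Coalgebra k C]
    [AddCommGroup M] [Module k M] [FiniteDimensional k M]
    (ρ : M →ₗ[k] C ⊗[k] M)
    (hcoassoc :
      (TensorProduct.assoc k C C M).toLinearMap ∘ₗ
          LinearMap.rTensor M (Coalgebra.comul (R := k)) ∘ₗ ρ =
        LinearMap.lTensor C ρ ∘ₗ ρ)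
    (hcounit :
      (TensorProduct.lid k M).toLinearMap ∘ₗ
          LinearMap.rTensor M (Coalgebra.counit (R := k)) ∘ₗ ρ = LinearMap.id) :
    ∃ E : Submodule k C, FiniteDimensional k E ∧
      (∀ y ∈ E, Coalgebra.comul (R := k) y ∈
        LinearMap.range (TensorProduct.map E.subtype E.subtype)) ∧
      ∀ x : M, ρ x ∈ LinearMap.range (LinearMap.rTensor M E.subtype) :=
  exists_finiteDimensional_subcoalgebra_of_finite_comodule_general k C M ρ hcoassoc
end

section
/- Let (B, d, h) be a curved DG-ring and let (M, d_M) be a left CDG-module over B. Suppose L ⊆ M is a graded B-submodule such that the composite L ↪ M →^{d_M} M ↠ M/L is an isomorphism of graded abelian groups (of degree 1) from L onto (M/L)[1]. Then the CDG-module (M, d_M) is contractible: there exists a B-linear homogeneous map t: M → M of degree −1 with d_M ∘ t + t ∘ d_M = id_M. -/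
/-!
Since `L ↪ M → M/L` is bijective, every `m : M` is congruent modulo `L` to `d_M y` for a
unique `y ∈ L`; the homotopy is `t m := y`, additive as the inverse of an additive bijection.
Each property of `t` follows from this uniqueness: the candidate value (`m - d_M (t m)` for
`t (d_M m)`, `± b • t m` for `t (b • m)`, the graded pieces of `t m` for `t` of graded pieces)
lies in `L` and satisfies the defining congruence, using `d_M² = h ·`, the Leibniz rule and
the gradings of `L` and `d_M` respectively.
-/

open DirectSum

theorem DirectSum.coe_decompose_map_add {ι M : Type*} [DecidableEq ι] [Add ι]
    [IsRightCancelAdd ι] [AddCommGroup M] (ℳ : ι → AddSubgroup M) [Decomposition ℳ]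
    (f : M →+ M) (s : ι) (hf : ∀ i, ∀ x ∈ ℳ i, f x ∈ ℳ (i + s)) (j : ι) (y : M) :
    (decompose ℳ (f y) (j + s) : M) = f (decompose ℳ y j) := by
  induction y using Decomposition.inductionOn ℳ with
  | zero => simp
  | @homogeneous i x =>
    obtain ⟨x, hx⟩ := x
    by_cases hij : i = j
    · subst hij
      rw [decompose_of_mem_same ℳ hx, decompose_of_mem_same ℳ (hf _ x hx)]
    · rw [decompose_of_mem_ne ℳ hx hij,
        decompose_of_mem_ne ℳ (hf _ x hx) (fun h => hij (add_right_cancel h)), map_zero]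
  | add y y' hy hy' =>
    simp only [map_add, decompose_add, add_apply, AddSubgroup.coe_add, hy, hy']

section ContractingHomotopy

variable {B M : Type*} [Ring B] [AddCommGroup M] [Module B M] {L : Submodule B M} {dM : M →+ M}

variable (L dM) in
def Submodule.quotientDifferential : L →+ M ⧸ L :=
  L.mkQ.toAddMonoidHom.comp (dM.comp L.subtype.toAddMonoidHom)

noncomputable def contractingHomotopy (hiso : Function.Bijective (L.quotientDifferential dM)) :
    M →+ M :=
  L.subtype.toAddMonoidHom.comp
    ((AddEquiv.ofBijective _ hiso).symm.toAddMonoidHom.comp L.mkQ.toAddMonoidHom)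

variable (hiso : Function.Bijective (L.quotientDifferential dM))

theorem contractingHomotopy_mem (m : M) : contractingHomotopy hiso m ∈ L :=
  Subtype.property _

theorem sub_differential_contractingHomotopy_mem (m : M) :
    m - dM (contractingHomotopy hiso m) ∈ L := by
  have hm := (AddEquiv.ofBijective _ hiso).apply_symm_apply (L.mkQ m)
  exact sub_mem_comm_iff.1 ((Submodule.Quotient.eq L).1 hm)

theorem contractingHomotopy_eq_of_sub_mem {m y : M} (hy : y ∈ L) (hmy : m - dM y ∈ L) :
    contractingHomotopy hiso m = y := by
  suffices (AddEquiv.ofBijective _ hiso).symm (L.mkQ m) = ⟨y, hy⟩ from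
    congrArg Subtype.val this
  rw [AddEquiv.symm_apply_eq, eq_comm]
  exact (Submodule.Quotient.eq L).2 (sub_mem_comm_iff.1 hmy)

theorem differential_contractingHomotopy_add (hL : ∀ x ∈ L, dM (dM x) ∈ L) (m : M) :
    dM (contractingHomotopy hiso m) + contractingHomotopy hiso (dM m) = m := by
  have ht : contractingHomotopy hiso (dM m) = m - dM (contractingHomotopy hiso m) := by
    refine contractingHomotopy_eq_of_sub_mem hiso
      (sub_differential_contractingHomotopy_mem hiso m) ?_
    rw [map_sub, sub_sub_cancel]
    exact hL _ (contractingHomotopy_mem hiso m)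
  rw [ht, add_sub_cancel]

theorem contractingHomotopy_smul {b c : B} {ε : ℤˣ}
    (hb : ∀ x, dM (b • x) = c • x + (ε : ℤ) • (b • dM x)) (m : M) :
    contractingHomotopy hiso (b • m) = (ε : ℤ) • (b • contractingHomotopy hiso m) := by
  set y := contractingHomotopy hiso m
  have hy : y ∈ L := contractingHomotopy_mem hiso m
  refine contractingHomotopy_eq_of_sub_mem hiso (L.smul_of_tower_mem _ (L.smul_mem b hy)) ?_
  have hεε : ∀ z : M, (ε : ℤ) • (ε : ℤ) • z = z := fun z => by
    rw [smul_smul, ← Units.val_mul, Int.units_mul_self, Units.val_one, one_smul]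
  have hdy : b • m - dM ((ε : ℤ) • b • y) = b • (m - dM y) - (ε : ℤ) • c • y := by
    rw [map_zsmul, hb, smul_add, hεε, smul_sub]
    abel
  rw [hdy]
  exact L.sub_mem (L.smul_mem b (sub_differential_contractingHomotopy_mem hiso m))
    (L.smul_of_tower_mem _ (L.smul_mem c hy))

variable {ι : Type*} [DecidableEq ι] [AddGroup ι] (ℳ : ι → AddSubgroup M)
  [Decomposition ℳ]

theorem contractingHomotopy_decompose (hL : ∀ i, ∀ x ∈ L, (decompose ℳ x i : M) ∈ L)
    {s : ι} (hdM : ∀ i, ∀ x ∈ ℳ i, dM x ∈ ℳ (i + s)) (j : ι) (m : M) :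
    contractingHomotopy hiso (decompose ℳ m (j + s)) =
      decompose ℳ (contractingHomotopy hiso m) j := by
  refine contractingHomotopy_eq_of_sub_mem hiso (hL j _ (contractingHomotopy_mem hiso m)) ?_
  rw [← coe_decompose_map_add ℳ dM s hdM, ← AddSubgroup.coe_sub, ← DirectSum.sub_apply,
    ← decompose_sub]
  exact hL _ _ (sub_differential_contractingHomotopy_mem hiso m)

theorem contractingHomotopy_mem_of_mem (hL : ∀ i, ∀ x ∈ L, (decompose ℳ x i : M) ∈ L)
    {s : ι} (hdM : ∀ i, ∀ x ∈ ℳ i, dM x ∈ ℳ (i + s)) {i : ι} {m : M}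
    (hm : m ∈ ℳ i) :
    contractingHomotopy hiso m ∈ ℳ (i - s) := by
  have ht := contractingHomotopy_decompose hiso ℳ hL hdM (i - s) m
  rw [sub_add_cancel, decompose_of_mem_same ℳ hm] at ht
  rw [ht]
  exact SetLike.coe_mem _

end ContractingHomotopy

theorem cdgModule_contractible_of_freely_generated_general
    (B : Type) [Ring B] (𝒜 : ℤ → AddSubgroup B)
    (d : B →+ B)
    (h : B)
    -- the graded left CDG-module (M, d_M)
    (M : Type) [AddCommGroup M] [Module B M]
    (ℳ : ℤ → AddSubgroup M) [DirectSum.Decomposition ℳ]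
    (dM : M →+ M)
    (hdegM : ∀ (i : ℤ), ∀ x ∈ ℳ i, dM x ∈ ℳ (i + 1))
    (hleibM : ∀ (i : ℤ), ∀ b ∈ 𝒜 i, ∀ x : M,
      dM (b • x) = d b • x + (((-1 : ℤˣ) ^ i : ℤˣ) : ℤ) • (b • dM x))
    (hdM2 : ∀ x : M, dM (dM x) = h • x)
    -- a graded B-submodule L ⊆ M
    (L : Submodule B M)
    (hLhom : ∀ (i : ℤ), ∀ x ∈ L, (DirectSum.decompose ℳ x i : M) ∈ L)
    -- the composite L ↪ M → M ↠ M/L is an isomorphism (of degree 1)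
    (hiso : Function.Bijective
      (fun x : L => (Submodule.Quotient.mk (dM (x : M)) : M ⧸ L))) :
    ∃ t : M →+ M,
      (∀ (i : ℤ), ∀ x ∈ ℳ i, t x ∈ ℳ (i - 1)) ∧
      (∀ (i : ℤ), ∀ b ∈ 𝒜 i, ∀ x : M,
        t (b • x) = (((-1 : ℤˣ) ^ i : ℤˣ) : ℤ) • (b • t x)) ∧
      (∀ x : M, dM (t x) + t (dM x) = x) :=
  ⟨contractingHomotopy hiso,
    fun _ _ => contractingHomotopy_mem_of_mem hiso ℳ hLhom hdegM,
    fun i b hb => contractingHomotopy_smul hiso (hleibM i b hb),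
    differential_contractingHomotopy_add hiso fun x hx => hdM2 x ▸ L.smul_mem h hx⟩

/-- a CDG-module freely generated by a graded submodule is contractible.
Let `(B, d, h)` be a curved DG-ring and `(M, d_M)` a left CDG-module over it.  If `L ⊆ M` is a
graded `B`-submodule such that the composite `L ↪ M → M ↠ M/L` (inclusion, then `d_M`, then
the projection) is bijective (an isomorphism of graded abelian groups of degree 1 onto
`(M/L)[1]`), then `(M, d_M)` is contractible: there is a homogeneous `B`-linear map
`t : M → M` of degree `−1` with `d_M ∘ t + t ∘ d_M = id`. -/
theorem cdgModule_contractible_of_freely_generated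
    (B : Type) [Ring B] (𝒜 : ℤ → AddSubgroup B) [GradedRing 𝒜]
    (d : B →+ B)
    (hdeg : ∀ (i : ℤ), ∀ x ∈ 𝒜 i, d x ∈ 𝒜 (i + 1))
    (hleib : ∀ (i : ℤ), ∀ b ∈ 𝒜 i, ∀ c : B,
      d (b * c) = d b * c + (((-1 : ℤˣ) ^ i : ℤˣ) : ℤ) • (b * d c))
    (h : B) (hh : h ∈ 𝒜 2)
    (hd2 : ∀ b : B, d (d b) = h * b - b * h)
    (hdh : d h = 0)
    -- the graded left CDG-module (M, d_M)
    (M : Type) [AddCommGroup M] [Module B M]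
    (ℳ : ℤ → AddSubgroup M) [DirectSum.Decomposition ℳ]
    (hsmulM : ∀ (i j : ℤ), ∀ b ∈ 𝒜 i, ∀ x ∈ ℳ j, b • x ∈ ℳ (i + j))
    (dM : M →+ M)
    (hdegM : ∀ (i : ℤ), ∀ x ∈ ℳ i, dM x ∈ ℳ (i + 1))
    (hleibM : ∀ (i : ℤ), ∀ b ∈ 𝒜 i, ∀ x : M,
      dM (b • x) = d b • x + (((-1 : ℤˣ) ^ i : ℤˣ) : ℤ) • (b • dM x))
    (hdM2 : ∀ x : M, dM (dM x) = h • x)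
    -- a graded B-submodule L ⊆ M
    (L : Submodule B M)
    (hLhom : ∀ (i : ℤ), ∀ x ∈ L, (DirectSum.decompose ℳ x i : M) ∈ L)
    -- the composite L ↪ M → M ↠ M/L is an isomorphism (of degree 1)
    (hiso : Function.Bijective
      (fun x : L => (Submodule.Quotient.mk (dM (x : M)) : M ⧸ L))) :
    ∃ t : M →+ M,
      (∀ (i : ℤ), ∀ x ∈ ℳ i, t x ∈ ℳ (i - 1)) ∧
      (∀ (i : ℤ), ∀ b ∈ 𝒜 i, ∀ x : M,
        t (b • x) = (((-1 : ℤˣ) ^ i : ℤˣ) : ℤ) • (b • t x)) ∧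
      (∀ x : M, dM (t x) + t (dM x) = x) :=
  cdgModule_contractible_of_freely_generated_general B 𝒜 d h M ℳ dM hdegM hleibM hdM2 L hLhom hiso
end
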